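/- arXiv:1209.2938 — 3 statements merged into one kernel-verified Lean document; each statement's English description precedes it below -/
import Mathlib

section
/- Let λ, μ ∈ ℂ with λ ≠ 0 and μ⁸ = −λ. Define a₁ = (7λ−9)μ²/(−λ), a₂ = 15(λ−1)μ⁴/(−λ), a₃ = (9λ−7)μ⁶/(−λ). Then the dihedral invariants u₁ = a₁⁴ + a₃⁴, u₂ = (a₁² + a₃²)a₂, u₃ = 2a₁a₃ satisfy: u₃ = −2(7λ−9)(9λ−7)/λ, u₂ = −15(λ−1)²(81λ² − 94λ + 81)/λ², and u₁ = −((7λ−9)⁴ + λ²(9λ−7)⁴)/λ³. -/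
/-! Each coefficient has the shape `aᵢ = cᵢ μ^(2i) / (-λ)` with `cᵢ` a polynomial in `λ`, and
each dihedral invariant is a sum of monomials whose `μ`-degree is a multiple of `8`. Substituting
`μ⁸ = -λ` eliminates `μ`, leaving rational functions of `λ` in which only `u₂` needs a further
factorization. -/

section WeightedCoefficients

variable {K : Type*} [Field K] {lam mu : K}

theorem pow_sixteen_of_pow_eight_eq_neg (hmu : mu ^ 8 = -lam) : mu ^ 16 = lam ^ 2 := by
  rw [show mu ^ 16 = (mu ^ 8) ^ 2 by ring, hmu, neg_sq]

variable (c₁ c₂ c₃ : K)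

theorem two_mul_weighted_mul_weighted (hlam : lam ≠ 0) (hmu : mu ^ 8 = -lam) :
    2 * (c₁ * mu ^ 2 / (-lam)) * (c₃ * mu ^ 6 / (-lam)) = -2 * c₁ * c₃ / lam := by
  field_simp
  rw [hmu]
  ring

theorem weighted_sq_add_sq_mul_weighted (hlam : lam ≠ 0) (hmu : mu ^ 8 = -lam) :
    ((c₁ * mu ^ 2 / (-lam)) ^ 2 + (c₃ * mu ^ 6 / (-lam)) ^ 2) * (c₂ * mu ^ 4 / (-lam)) =
      (c₁ ^ 2 - lam * c₃ ^ 2) * c₂ / lam ^ 2 := by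
  field_simp
  rw [hmu]
  ring

theorem weighted_pow_four_add_pow_four (hlam : lam ≠ 0) (hmu : mu ^ 8 = -lam) :
    (c₁ * mu ^ 2 / (-lam)) ^ 4 + (c₃ * mu ^ 6 / (-lam)) ^ 4 =
      -(c₁ ^ 4 + lam ^ 2 * c₃ ^ 4) / lam ^ 3 := by
  field_simp
  rw [pow_sixteen_of_pow_eight_eq_neg hmu, hmu]
  ring

end WeightedCoefficients

theorem sq_sub_mul_sq_eq_neg_mul {R : Type*} [CommRing R] (lam : R) :
    (7 * lam - 9) ^ 2 - lam * (9 * lam - 7) ^ 2 = -((lam - 1) * (81 * lam ^ 2 - 94 * lam + 81)) := by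
  ring

/-- Dihedral invariants of the `D₁₂` family of genus 3 hyperelliptic curves. -/
theorem D12_dihedral_invariants (lam mu : ℂ) (hlam : lam ≠ 0) (hmu : mu ^ 8 = -lam)
    (a₁ a₂ a₃ u₁ u₂ u₃ : ℂ)
    (ha₁ : a₁ = (7 * lam - 9) * mu ^ 2 / (-lam))
    (ha₂ : a₂ = 15 * (lam - 1) * mu ^ 4 / (-lam))
    (ha₃ : a₃ = (9 * lam - 7) * mu ^ 6 / (-lam))
    (hu₁ : u₁ = a₁ ^ 4 + a₃ ^ 4) (hu₂ : u₂ = (a₁ ^ 2 + a₃ ^ 2) * a₂)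
    (hu₃ : u₃ = 2 * a₁ * a₃) :
    u₃ = -2 * (7 * lam - 9) * (9 * lam - 7) / lam ∧
    u₂ = -15 * (lam - 1) ^ 2 * (81 * lam ^ 2 - 94 * lam + 81) / lam ^ 2 ∧
    u₁ = -((7 * lam - 9) ^ 4 + lam ^ 2 * (9 * lam - 7) ^ 4) / lam ^ 3 := by
  subst ha₁ ha₂ ha₃ hu₁ hu₂ hu₃
  refine ⟨two_mul_weighted_mul_weighted _ _ hlam hmu, ?_,
    weighted_pow_four_add_pow_four _ _ hlam hmu⟩
  rw [weighted_sq_add_sq_mul_weighted _ _ _ hlam hmu, sq_sub_mul_sq_eq_neg_mul]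
  ring
end

section
/- Let λ ∈ ℂ satisfy 81λ² − 94λ + 81 = 0 (note λ ≠ 0, λ ≠ 1 automatically). Let μ ∈ ℂ with μ⁸ = −λ and define a₁ = (7λ−9)μ²/(−λ), a₃ = (9λ−7)μ⁶/(−λ), u₁ = a₁⁴ + a₃⁴, u₃ = 2a₁a₃. Then u₃ = 1024/9 and 2u₁ = −u₃², i.e. u₁ = −524288/81. -/
/-- For `81λ² − 94λ + 81 = 0` the `D₁₂` family degenerates to the `U₆` curve, with
dihedral invariants `u₃ = 1024/9`, `u₁ = −524288/81`, satisfying `2u₁ = −u₃²`. -/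
theorem U6_dihedral_invariants (lam mu : ℂ) (hlam : 81 * lam ^ 2 - 94 * lam + 81 = 0)
    (hmu : mu ^ 8 = -lam) (a₁ a₃ u₁ u₃ : ℂ)
    (ha₁ : a₁ = (7 * lam - 9) * mu ^ 2 / (-lam))
    (ha₃ : a₃ = (9 * lam - 7) * mu ^ 6 / (-lam))
    (hu₁ : u₁ = a₁ ^ 4 + a₃ ^ 4) (hu₃ : u₃ = 2 * a₁ * a₃) :
    u₃ = 1024 / 9 ∧ 2 * u₁ = -u₃ ^ 2 ∧ u₁ = -524288 / 81 := by
  have hl0 : lam ≠ 0 := by intro h; rw [h] at hlam; norm_num at hlam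
  subst ha₁ ha₃ hu₁ hu₃
  have h3 : (2 : ℂ) * ((7 * lam - 9) * mu ^ 2 / (-lam)) * ((9 * lam - 7) * mu ^ 6 / (-lam)) = 1024 / 9 := by
    field_simp
    linear_combination (18*(7*lam-9)*(9*lam-7))*hmu + (-14*lam)*hlam
  have h1 : ((7 * lam - 9) * mu ^ 2 / (-lam)) ^ 4 + ((9 * lam - 7) * mu ^ 6 / (-lam)) ^ 4 = -524288 / 81 := by
    have h4 : (-lam) ^ 4 ≠ 0 := pow_ne_zero _ (neg_ne_zero.mpr hl0)
    field_simp
    linear_combination (81*(7*lam-9)^4 + 81*(9*lam-7)^4*(mu^16 - lam*mu^8 + lam^2))*hmu + (-6561*lam^5+12798*lam^4-4802*lam^3+12798*lam^2-6561*lam)*hlam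
  refine ⟨h3, ?_, h1⟩
  rw [h3, h1]; norm_num
end

section
/- Let G be the group of k-algebra automorphisms of the rational function field ℂ(a₁, a₂, a₃) generated by σ: (a₁,a₂,a₃) ↦ (a₃,a₂,a₁) and τ: (a₁,a₂,a₃) ↦ (ε²a₁, ε⁴a₂, ε⁶a₃) where ε is a primitive 8th root of unity. Then the fixed field of G equals ℂ(u₁, u₂, u₃), where u₁ = a₁⁴ + a₃⁴, u₂ = (a₁² + a₃²)a₂, u₃ = 2a₁a₃. -/
set_option maxHeartbeats 1000000
set_option synthInstance.maxHeartbeats 400000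

open IntermediateField Polynomial

/-- Auxiliary: if an intermediate field `M` contains `u₂` and `u₃`, then `F = M(a₀)`. -/
theorem aux_top (F : Type*) [Field F] [Algebra (MvPolynomial (Fin 3) ℂ) F]
    [IsFractionRing (MvPolynomial (Fin 3) ℂ) F] [Algebra ℂ F]
    [IsScalarTower ℂ (MvPolynomial (Fin 3) ℂ) F]
    (a : Fin 3 → F) (ha : ∀ i, a i = algebraMap (MvPolynomial (Fin 3) ℂ) F (MvPolynomial.X i))
    (u₂ u₃ : F)
    (hu₂ : u₂ = ((a 0) ^ 2 + (a 2) ^ 2) * a 1)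
    (hu₃ : u₃ = 2 * a 0 * a 2)
    (M : IntermediateField ℂ F) (h2 : u₂ ∈ M) (h3 : u₃ ∈ M) :
    IntermediateField.adjoin M {a 0} = ⊤ := by
  have hinj := IsFractionRing.injective (MvPolynomial (Fin 3) ℂ) F
  haveI : CharZero F := charZero_of_injective_algebraMap (algebraMap ℂ F).injective
  have ha0 : a 0 ≠ 0 := by
    rw [ha 0]
    intro h
    exact MvPolynomial.X_ne_zero (R := ℂ) (0 : Fin 3) (hinj (by rw [map_zero]; exact h))
  have ha02 : (a 0) ^ 2 + (a 2) ^ 2 ≠ 0 := by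
    rw [ha 0, ha 2, ← map_pow, ← map_pow, ← map_add]
    intro h
    have h0 : (MvPolynomial.X 0 ^ 2 + MvPolynomial.X 2 ^ 2 : MvPolynomial (Fin 3) ℂ) = 0 :=
      hinj (by rw [map_zero]; exact h)
    have := congrArg (MvPolynomial.coeff (Finsupp.single (0 : Fin 3) 2)) h0
    rw [MvPolynomial.coeff_add, MvPolynomial.X_pow_eq_monomial, MvPolynomial.X_pow_eq_monomial,
      MvPolynomial.coeff_monomial, MvPolynomial.coeff_monomial] at this
    simp [Finsupp.single_eq_single_iff] at this
  set N := IntermediateField.adjoin M {a 0} with hN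
  have memM : ∀ x, x ∈ M → x ∈ N := fun x hx => by
    have : algebraMap M F ⟨x, hx⟩ ∈ N := N.algebraMap_mem _
    simpa using this
  have a0mem : a 0 ∈ N := IntermediateField.subset_adjoin _ _ rfl
  have a2mem : a 2 ∈ N := by
    have : a 2 = u₃ / (2 * a 0) := by
      rw [hu₃]; field_simp
    rw [this]
    exact N.div_mem (memM _ h3) (N.mul_mem (by exact_mod_cast N.natCast_mem 2) a0mem)
  have a1mem : a 1 ∈ N := by
    have : a 1 = u₂ / ((a 0) ^ 2 + (a 2) ^ 2) := by rw [hu₂]; field_simp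
    rw [this]
    exact N.div_mem (memM _ h2) (N.add_mem (pow_mem a0mem 2) (pow_mem a2mem 2))
  rw [eq_top_iff]
  intro x _
  obtain ⟨p, q, hq, rfl⟩ := @IsFractionRing.div_surjective (MvPolynomial (Fin 3) ℂ) _ F _ _ _ x
  have hpoly : ∀ p : MvPolynomial (Fin 3) ℂ, algebraMap (MvPolynomial (Fin 3) ℂ) F p ∈ N := by
    intro p
    induction p using MvPolynomial.induction_on with
    | C c =>
        have : algebraMap (MvPolynomial (Fin 3) ℂ) F (MvPolynomial.C c) = algebraMap ℂ F c := by
          rw [IsScalarTower.algebraMap_apply ℂ (MvPolynomial (Fin 3) ℂ) F]; simp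
        rw [this]
        exact memM _ (M.algebraMap_mem c)
    | add p q hp hq => rw [map_add]; exact N.add_mem hp hq
    | mul_X p i hp =>
        rw [map_mul]
        refine N.mul_mem hp ?_
        rw [← ha i]
        fin_cases i <;> assumption
  exact N.div_mem (hpoly p) (hpoly q)

/-- Auxiliary: if `M` contains `u₁` and `u₃`, then `a₀` is a root of a monic polynomial
of degree `8` over `M`. -/
theorem aux_deg (F : Type*) [Field F] [Algebra ℂ F] [CharZero F]
    (a0 a2 u₁ u₃ : F)
    (hu₁ : u₁ = a0 ^ 4 + a2 ^ 4)
    (hu₃ : u₃ = 2 * a0 * a2)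
    (M : IntermediateField ℂ F) (h1 : u₁ ∈ M) (h3 : u₃ ∈ M) :
    ∃ p : Polynomial M, p.Monic ∧ p.natDegree = 8 ∧ aeval a0 p = 0 := by
  have h16 : (u₃ ^ 4 / 16 : F) ∈ M := M.div_mem (pow_mem h3 4) (by exact_mod_cast M.natCast_mem 16)
  refine ⟨X ^ 8 - C ⟨u₁, h1⟩ * X ^ 4 + C ⟨u₃ ^ 4 / 16, h16⟩, ?_, ?_, ?_⟩
  · monicity!
  · compute_degree!
  · have h16' : (16 : F) ≠ 0 := by norm_num
    simp only [map_add, map_sub, map_mul, map_pow, aeval_X, aeval_C]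
    show a0 ^ 8 - u₁ * a0 ^ 4 + u₃ ^ 4 / 16 = 0
    rw [hu₁, hu₃]
    field_simp
    ring

/-- The fixed field of the group generated by `σ : (a₁,a₂,a₃) ↦ (a₃,a₂,a₁)` and
`τ : (a₁,a₂,a₃) ↦ (ε²a₁, ε⁴a₂, ε⁶a₃)` (with `ε` a primitive 8th root of unity) acting on
`ℂ(a₁,a₂,a₃)` is `ℂ(u₁,u₂,u₃)` where `u₁ = a₁⁴ + a₃⁴`, `u₂ = (a₁² + a₃²)a₂`, `u₃ = 2a₁a₃`. -/
theorem fixedField_dihedral_invariants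
    (F : Type*) [Field F] [Algebra (MvPolynomial (Fin 3) ℂ) F]
    [IsFractionRing (MvPolynomial (Fin 3) ℂ) F] [Algebra ℂ F]
    [IsScalarTower ℂ (MvPolynomial (Fin 3) ℂ) F]
    (a : Fin 3 → F) (ha : ∀ i, a i = algebraMap (MvPolynomial (Fin 3) ℂ) F (MvPolynomial.X i))
    (ε : ℂ) (hε : IsPrimitiveRoot ε 8)
    (σ τ : F ≃ₐ[ℂ] F)
    (hσ0 : σ (a 0) = a 2) (hσ1 : σ (a 1) = a 1) (hσ2 : σ (a 2) = a 0)
    (hτ0 : τ (a 0) = algebraMap ℂ F (ε ^ 2) * a 0)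
    (hτ1 : τ (a 1) = algebraMap ℂ F (ε ^ 4) * a 1)
    (hτ2 : τ (a 2) = algebraMap ℂ F (ε ^ 6) * a 2)
    (u₁ u₂ u₃ : F)
    (hu₁ : u₁ = (a 0) ^ 4 + (a 2) ^ 4)
    (hu₂ : u₂ = ((a 0) ^ 2 + (a 2) ^ 2) * a 1)
    (hu₃ : u₃ = 2 * a 0 * a 2) :
    IntermediateField.fixedField (Subgroup.closure {σ, τ}) =
      IntermediateField.adjoin ℂ {u₁, u₂, u₃} := by
  classical
  have hinj := IsFractionRing.injective (MvPolynomial (Fin 3) ℂ) F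
  have hinjC : Function.Injective (algebraMap ℂ F) := (algebraMap ℂ F).injective
  haveI : CharZero F := charZero_of_injective_algebraMap hinjC
  set G := Subgroup.closure {σ, τ} with hG
  set L := IntermediateField.fixedField G with hLdef
  set K := IntermediateField.adjoin ℂ {u₁, u₂, u₃} with hKdef
  -- notation: t = image of ε in F
  set t : F := algebraMap ℂ F ε with htdef
  have ht8 : t ^ 8 = 1 := by rw [htdef, ← map_pow, hε.pow_eq_one, map_one]
  have hτ0' : τ (a 0) = t ^ 2 * a 0 := by rw [hτ0, map_pow]
  have hτ1' : τ (a 1) = t ^ 4 * a 1 := by rw [hτ1, map_pow]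
  have hτ2' : τ (a 2) = t ^ 6 * a 2 := by rw [hτ2, map_pow]
  -- σ and τ fix u₁, u₂, u₃
  have hσu₁ : σ u₁ = u₁ := by rw [hu₁, map_add, map_pow, map_pow, hσ0, hσ2]; ring
  have hσu₂ : σ u₂ = u₂ := by
    rw [hu₂, map_mul, map_add, map_pow, map_pow, hσ0, hσ1, hσ2]; ring
  have hσu₃ : σ u₃ = u₃ := by
    rw [hu₃, map_mul, map_mul, hσ0, hσ2, map_ofNat]; ring
  have hτu₁ : τ u₁ = u₁ := by
    rw [hu₁, map_add, map_pow, map_pow, hτ0', hτ2']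
    linear_combination (a 0 ^ 4) * ht8 + (a 2 ^ 4) * (t ^ 16 + t ^ 8 + 1) * ht8
  have hτu₂ : τ u₂ = u₂ := by
    rw [hu₂, map_mul, map_add, map_pow, map_pow, hτ0', hτ1', hτ2']
    linear_combination (a 0 ^ 2 * a 1) * ht8 + (a 2 ^ 2 * a 1) * (t ^ 8 + 1) * ht8
  have hτu₃ : τ u₃ = u₃ := by
    rw [hu₃, map_mul, map_mul, hτ0', hτ2', map_ofNat]
    linear_combination (2 * a 0 * a 2) * ht8
  -- everything in G fixes u₁, u₂, u₃
  have hfix : ∀ u : F, σ u = u → τ u = u → ∀ g ∈ G, g u = u := by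
    intro u hs ht g hg
    induction hg using Subgroup.closure_induction with
    | mem g hgmem =>
        rcases hgmem with h | h
        · rw [h]; exact hs
        · rw [Set.mem_singleton_iff] at h; rw [h]; exact ht
    | one => rfl
    | mul g h _ _ hgu hhu => show g (h u) = u; rw [hhu, hgu]
    | inv g _ hgu =>
        have : g⁻¹ (g u) = u := by
          show (g⁻¹ * g) u = u
          rw [inv_mul_cancel]; rfl
        rwa [hgu] at this
  -- K ≤ L
  have hKL : K ≤ L := by
    rw [hKdef, IntermediateField.adjoin_le_iff]
    rintro x (rfl | rfl | rfl)
    · exact fun g => hfix _ hσu₁ hτu₁ g.1 g.2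
    · exact fun g => hfix _ hσu₂ hτu₂ g.1 g.2
    · exact fun g => hfix _ hσu₃ hτu₃ g.1 g.2
  -- memberships of the u's
  have hu1K : u₁ ∈ K := IntermediateField.subset_adjoin _ _ (by simp)
  have hu2K : u₂ ∈ K := IntermediateField.subset_adjoin _ _ (by simp)
  have hu3K : u₃ ∈ K := IntermediateField.subset_adjoin _ _ (by simp)
  -- F = K(a 0) = L(a 0), finite of degree ≤ 8 over K
  have hKtop : IntermediateField.adjoin K {a 0} = ⊤ :=
    aux_top F a ha u₂ u₃ hu₂ hu₃ K hu2K hu3K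
  have hLtop : IntermediateField.adjoin L {a 0} = ⊤ :=
    aux_top F a ha u₂ u₃ hu₂ hu₃ L (hKL hu2K) (hKL hu3K)
  obtain ⟨pK, hpKm, hpKd, hpK0⟩ := aux_deg F (a 0) (a 2) u₁ u₃ hu₁ hu₃ K hu1K hu3K
  obtain ⟨pL, hpLm, hpLd, hpL0⟩ := aux_deg F (a 0) (a 2) u₁ u₃ hu₁ hu₃ L (hKL hu1K) (hKL hu3K)
  have hintK : IsIntegral K (a 0) := ⟨pK, hpKm, by rw [← aeval_def]; exact hpK0⟩
  have hintL : IsIntegral L (a 0) := ⟨pL, hpLm, by rw [← aeval_def]; exact hpL0⟩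
  haveI hfdK : FiniteDimensional K F := by
    have h1 := IntermediateField.adjoin.finiteDimensional hintK
    rw [hKtop] at h1
    exact Module.Finite.equiv (IntermediateField.topEquiv (F := K) (E := F)).toLinearEquiv
  haveI hfdL : FiniteDimensional L F := by
    have h1 := IntermediateField.adjoin.finiteDimensional hintL
    rw [hLtop] at h1
    exact Module.Finite.equiv (IntermediateField.topEquiv (F := L) (E := F)).toLinearEquiv
  have frK : Module.finrank K F = (minpoly K (a 0)).natDegree := by
    rw [← IntermediateField.finrank_top', ← hKtop, IntermediateField.adjoin.finrank hintK]
  have frL : Module.finrank L F = (minpoly L (a 0)).natDegree := by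
    rw [← IntermediateField.finrank_top', ← hLtop, IntermediateField.adjoin.finrank hintL]
  have hK8 : Module.finrank K F ≤ 8 := by
    rw [frK, ← hpKd]
    exact natDegree_le_of_dvd (minpoly.dvd K _ hpK0) hpKm.ne_zero
  -- lower bound: the minimal polynomial of `a 0` over `L` has at least 8 roots
  set m : Polynomial L := minpoly L (a 0) with hmdef
  set mm : Polynomial F := m.map (algebraMap L F) with hmmdef
  have hmm0 : mm ≠ 0 := ((minpoly.monic hintL).map (algebraMap L F)).ne_zero
  have hroot : ∀ g : F ≃ₐ[ℂ] F, g ∈ G → g (a 0) ∈ mm.roots := by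
    intro g hg
    rw [hmmdef, mem_roots hmm0, IsRoot, eval_map, ← aeval_def]
    let g' : F →ₐ[L] F :=
      { toFun := g
        map_one' := map_one g
        map_mul' := map_mul g
        map_zero' := map_zero g
        map_add' := map_add g
        commutes' := fun c => c.2 ⟨g, hg⟩ }
    have h1 : aeval (g' (a 0)) m = g' (aeval (a 0) m) := aeval_algHom_apply g' (a 0) m
    rw [minpoly.aeval, map_zero] at h1
    exact h1
  -- powers of τ and their values on a 0
  have hτG : τ ∈ G := Subgroup.subset_closure (by simp)
  have hσG : σ ∈ G := Subgroup.subset_closure (by simp)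
  have hτpow : ∀ j : ℕ, (τ ^ j) (a 0) = t ^ (2 * j) * a 0 := by
    intro j
    induction j with
    | zero => simp
    | succ j ih =>
        have : (τ ^ (j + 1)) (a 0) = τ ((τ ^ j) (a 0)) := by
          rw [pow_succ']; rfl
        rw [this, ih, map_mul, map_pow, htdef, AlgEquiv.commutes, hτ0, map_pow]
        ring
  have hσt : ∀ k : ℕ, σ (t ^ k * a 0) = t ^ k * a 2 := by
    intro k
    rw [map_mul, map_pow, htdef, AlgEquiv.commutes, hσ0]
  -- the 8 distinct roots
  have ha0 : a 0 ≠ 0 := by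
    rw [ha 0]
    intro h
    exact MvPolynomial.X_ne_zero (R := ℂ) (0 : Fin 3) (hinj (by rw [map_zero]; exact h))
  have ha2 : a 2 ≠ 0 := by
    rw [ha 2]
    intro h
    exact MvPolynomial.X_ne_zero (R := ℂ) (2 : Fin 3) (hinj (by rw [map_zero]; exact h))
  have hεne : ε ≠ 0 := hε.ne_zero (by norm_num)
  have hcast : ∀ d : ℂ, algebraMap ℂ F d = algebraMap (MvPolynomial (Fin 3) ℂ) F
      (MvPolynomial.C d) := by
    intro d
    rw [IsScalarTower.algebraMap_apply ℂ (MvPolynomial (Fin 3) ℂ) F]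
    simp
  have ne02 : ∀ j k : ℕ, t ^ j * a 0 ≠ t ^ k * a 2 := by
    intro j k h
    rw [htdef, ← map_pow, ← map_pow, ha 0, ha 2, hcast, hcast, ← map_mul, ← map_mul] at h
    have h0 := hinj h
    have h2 := congrArg (MvPolynomial.coeff (Finsupp.single (0 : Fin 3) 1)) h0
    rw [MvPolynomial.coeff_C_mul, MvPolynomial.coeff_C_mul, MvPolynomial.coeff_X',
      MvPolynomial.coeff_X'] at h2
    simp only [Finsupp.single_eq_single_iff] at h2
    norm_num at h2
    exact pow_ne_zero j hεne h2
  have ne00 : ∀ j k : ℕ, j < 8 → k < 8 → t ^ j * a 0 = t ^ k * a 0 → j = k := by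
    intro j k hj hk h
    have h1 : t ^ j = t ^ k := mul_right_cancel₀ ha0 h
    rw [htdef, ← map_pow, ← map_pow] at h1
    exact hε.pow_inj hj hk (hinjC h1)
  have ne22 : ∀ j k : ℕ, j < 8 → k < 8 → t ^ j * a 2 = t ^ k * a 2 → j = k := by
    intro j k hj hk h
    have h1 : t ^ j = t ^ k := mul_right_cancel₀ ha2 h
    rw [htdef, ← map_pow, ← map_pow] at h1
    exact hε.pow_inj hj hk (hinjC h1)
  -- the finset of roots
  set T : Finset F := (Finset.range 4).image (fun j => t ^ (2 * j) * a 0) ∪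
      (Finset.range 4).image (fun j => t ^ (2 * j) * a 2) with hTdef
  have hTcard : T.card = 8 := by
    rw [hTdef, Finset.card_union_of_disjoint, Finset.card_image_of_injOn,
      Finset.card_image_of_injOn, Finset.card_range]
    · intro j hj k hk h
      rw [Finset.mem_coe, Finset.mem_range] at hj hk
      have := ne22 (2 * j) (2 * k) (by omega) (by omega) h
      omega
    · intro j hj k hk h
      rw [Finset.mem_coe, Finset.mem_range] at hj hk
      have := ne00 (2 * j) (2 * k) (by omega) (by omega) h
      omega
    · rw [Finset.disjoint_left]
      rintro x hx hx'
      rw [Finset.mem_image] at hx hx'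
      obtain ⟨j, -, rfl⟩ := hx
      obtain ⟨k, -, hk⟩ := hx'
      exact ne02 (2 * j) (2 * k) hk.symm
  have hTsub : T ⊆ mm.roots.toFinset := by
    intro x hx
    rw [Multiset.mem_toFinset]
    rw [hTdef, Finset.mem_union, Finset.mem_image, Finset.mem_image] at hx
    rcases hx with ⟨j, -, rfl⟩ | ⟨j, -, rfl⟩
    · have := hroot (τ ^ j) (pow_mem hτG j)
      rwa [hτpow j] at this
    · have := hroot (σ * τ ^ j) (mul_mem hσG (pow_mem hτG j))
      have h1 : (σ * τ ^ j) (a 0) = t ^ (2 * j) * a 2 := by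
        show σ ((τ ^ j) (a 0)) = _
        rw [hτpow j, hσt]
      rwa [h1] at this
  have hL8 : 8 ≤ Module.finrank L F := by
    rw [frL]
    calc (8 : ℕ) = T.card := hTcard.symm
      _ ≤ mm.roots.toFinset.card := Finset.card_le_card hTsub
      _ ≤ Multiset.card mm.roots := Multiset.toFinset_card_le _
      _ ≤ mm.natDegree := mm.card_roots'
      _ = m.natDegree := natDegree_map (algebraMap L F)
  exact (IntermediateField.eq_of_le_of_finrank_le' hKL (hK8.trans hL8)).symm
end
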